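/- Fix a k-anxious root of unity α, let m be the smallest positive integer such that α^{k^m} = α, and let 𝒜 be the disjoint union of the sets A_{α^{k^i}} for 0 ≤ i ≤ m−1. Let (c_1,…,c_m) be a sequence of rational functions of length exactly m with every c_i ≠ 0. Assume that clm_{(a_i)}(c_i) ≥ 0 for every (a_i) ∈ 𝒜, and that for every a ≥ 0, 1 ≤ b ≤ m and every (a_i) ∈ minclm_{a,b}(c_i), the calmness clm_{(a_i)}(c_i) = 0. Then there exists a nonzero polynomial h ∈ K[z] such that the sequence h*(c_i) is α^{k^i}-calm for every i ≥ 0, i.e. no term of h*(c_i) has a pole at any α^{k^i}. -/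

import Mathlib

open Polynomial

attribute [local instance] Classical.propDecidable

noncomputable section

variable {K : Type*} [Field K]

/-- Integer order of vanishing of a rational function at `α` (junk value `0` for `c = 0`). -/
def vInt (α : K) (c : RatFunc K) : ℤ :=
  (c.num.rootMultiplicity α : ℤ) - (c.denom.rootMultiplicity α : ℤ)

/-- The `(z - α)`-adic valuation on `K(z)`, with `vAt α 0 = ⊤`. -/
def vAt (α : K) (c : RatFunc K) : WithTop ℤ :=
  if c = 0 then ⊤ else (vInt α c : WithTop ℤ)

/-- Substitution `z ↦ z^i` in a rational function. -/
def substPow (i : ℕ) (c : RatFunc K) : RatFunc K :=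
  RatFunc.eval (algebraMap K (RatFunc K)) (RatFunc.X ^ i) c

/-- A polynomial viewed as a rational function. -/
def toRat (p : Polynomial K) : RatFunc K := algebraMap (Polynomial K) (RatFunc K) p

/-- A rational function is a polynomial. -/
def IsPolyFun (c : RatFunc K) : Prop := ∃ p : Polynomial K, c = toRat p

def IsRootOfUnity (α : K) : Prop := ∃ m : ℕ, 0 < m ∧ α ^ m = 1

/-- `α` is `k`-calm: zero, or a root of unity whose order is not coprime to `k`. -/
def IsCalmNum (k : ℕ) (α : K) : Prop :=
  α = 0 ∨ (0 < orderOf α ∧ ¬ Nat.Coprime (orderOf α) k)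

def IsAnxious (k : ℕ) (α : K) : Prop := ¬ IsCalmNum k α

/-- A rational function is `k`-calm: no poles at `k`-anxious numbers. -/
def IsCalmFun (k : ℕ) (c : RatFunc K) : Prop :=
  ∀ α : K, IsAnxious k α → 0 ≤ vAt α c

/-- Action of a rational function `h` on a finite sequence `(c_1, …, c_n)`;
the index `i : Fin n` stands for the 1-based index `i+1`. -/
def act (k : ℕ) (h : RatFunc K) {n : ℕ} (c : Fin n → RatFunc K) : Fin n → RatFunc K :=
  fun i => substPow (k ^ (i.1 + 1)) h / h * c i

def IsPrecalmSeq (k : ℕ) {n : ℕ} (c : Fin n → RatFunc K) : Prop :=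
  ∃ h : Polynomial K, h ≠ 0 ∧ ∀ i, IsCalmFun k (act k (toRat h) c i)

/-- Partial sums `ā_i = a_0 + … + a_{i-1}` of an infinite sequence with values in `{1,…,n}`. -/
def abarInf {n : ℕ} (a : ℕ → Fin n) (i : ℕ) : ℕ :=
  ∑ j ∈ Finset.range i, ((a j).1 + 1)

/-- Partial sums for a finite sequence (a list). -/
def abarList {n : ℕ} (l : List (Fin n)) (i : ℕ) : ℕ :=
  ((l.take i).map (fun j => j.1 + 1)).sum

/-- Full sum `ā_μ` of a finite sequence. -/
def barSum {n : ℕ} (l : List (Fin n)) : ℕ := (l.map (fun j => j.1 + 1)).sum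

/-- Calmness w.r.t. an anxious `α` that is not a root of unity and an infinite sequence. -/
def clmInf (k : ℕ) (α : K) {n : ℕ} (c : Fin n → RatFunc K) (a : ℕ → Fin n) : WithTop ℤ :=
  if ∃ i, c (a i) = 0 then ⊤
  else ((∑ᶠ i : ℕ, vInt (α ^ k ^ abarInf a i) (c (a i)) : ℤ) : WithTop ℤ)

/-- Calmness w.r.t. an anxious root of unity `α` and a finite sequence. -/
def clmList (k : ℕ) (α : K) {n : ℕ} (c : Fin n → RatFunc K) (l : List (Fin n)) : WithTop ℤ :=
  ∑ i : Fin l.length, vAt (α ^ k ^ abarList l i.1) (c (l.get i))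

/-- Calmness of a single rational function w.r.t. an anxious `α`. -/
def clmOne (k : ℕ) (α : K) (c : RatFunc K) : WithTop ℤ :=
  if hμ : ∃ μ : ℕ, 0 < μ ∧ α ^ k ^ μ = α then
    ∑ i ∈ Finset.range (Nat.find hμ), vAt (α ^ k ^ i) c
  else if c = 0 then ⊤
  else ((∑ᶠ i : ℕ, vInt (α ^ k ^ i) c : ℤ) : WithTop ℤ)

/-- The `k`-kernel of a sequence. -/
def kernelSet (k : ℕ) (a : ℕ → K) : Set (ℕ → K) :=
  { b | ∃ e r : ℕ, r < k ^ e ∧ b = fun i => a (k ^ e * i + r) }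

/-- `k`-regularity of a formal power series. -/
def IsRegularSeries (k : ℕ) (f : PowerSeries K) : Prop :=
  FiniteDimensional K (Submodule.span K (kernelSet k (fun i => PowerSeries.coeff i f)))

/-- Cartier operator `Λ_{k,r}`. -/
def cartier (k r : ℕ) (f : PowerSeries K) : PowerSeries K :=
  PowerSeries.mk fun i => PowerSeries.coeff (k * i + r) f

/-- Substitution `z ↦ z^m` in a power series (for `m ≥ 1`). -/
def psSubstPow (m : ℕ) (f : PowerSeries K) : PowerSeries K :=
  PowerSeries.mk fun i => if m ∣ i then PowerSeries.coeff (i / m) f else 0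

/-- `f` satisfies the Mahler equation `f(z) = Σ_{i=1}^n c_i(z) f(z^{k^i})`. -/
def SatisfiesMahler (k : ℕ) {n : ℕ} (c : Fin n → RatFunc K) (f : PowerSeries K) : Prop :=
  ∃ (q : Polynomial K) (p : Fin n → Polynomial K), q ≠ 0 ∧
    (∀ i, toRat q * c i = toRat (p i)) ∧
    (q : PowerSeries K) * f = ∑ i : Fin n, ((p i : PowerSeries K) * psSubstPow (k ^ (i.1 + 1)) f)


/-- Substitution `z ↦ z^m` in a formal Laurent series (for `m ≥ 1`). -/
def lsSubstPow (m : ℕ) (g : LaurentSeries K) : LaurentSeries K :=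
  if h : 0 < m then
    HahnSeries.embDomain
      (OrderEmbedding.ofStrictMono (fun n : ℤ => (m : ℤ) * n)
        (fun a b hab => by
          exact mul_lt_mul_of_pos_left hab (by exact_mod_cast h))) g
  else 0

/-- A Laurent series `g` satisfies the Mahler equation `g(z) = Σ_{i=1}^n b_i(z) g(z^{k^i})`
with polynomial coefficients. -/
def SatisfiesMahlerPolyLS (k : ℕ) {n : ℕ} (b : Fin n → Polynomial K) (g : LaurentSeries K) : Prop :=
  g = ∑ i : Fin n, (((b i : PowerSeries K) : LaurentSeries K) * lsSubstPow (k ^ (i.1 + 1)) g)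

/-- Coefficients `d_{i,m}` of the special operators associated to `(c_1, …, c_n)`:
`dCoef k c m i` is `d_{i,m}`, with value `0` outside the range `1 ≤ i ≤ m + n`. -/
def dCoef (k : ℕ) {n : ℕ} (c : Fin n → RatFunc K) : ℕ → ℕ → RatFunc K
  | 0 => fun i => if h : 1 ≤ i ∧ i ≤ n then c ⟨i - 1, by omega⟩ else 0
  | m + 1 => fun i =>
      if _h1 : i ≤ m then dCoef k c m i
      else if _h2 : i = m + 1 then 0
      else if h3 : i ≤ m + 1 + n then
        dCoef k c m i + dCoef k c m (m + 1) * substPow (k ^ (m + 1)) (c ⟨i - m - 2, by omega⟩)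
      else 0

end

/-!
Let `O = {α ^ k ^ j}` be the finite orbit of `α` and view it as a weighted directed graph: from
`β ∈ O` and for each `i` there is an edge to `β ^ k ^ (i + 1)` of weight `v_β(c_i)`. A calmness
`clm_{β,(a_i)}` is the weight of a closed walk, so the hypothesis says that no cycle has negative
weight. As for shortest paths, this gives a potential `e : O → ℕ` with
`e β ≤ e (β ^ k ^ (i + 1)) + v_β(c_i)`: let `e v` be the largest value of minus the weight of a
walk ending at `v`, which is finite because cutting out cycles shortens a walk without increasing
its weight. Then `h = ∏_{β ∈ O} (z - β) ^ e β` works, since at `β` the polynomial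
`h(z ^ k ^ (i + 1))` vanishes to order at least `e (β ^ k ^ (i + 1))` and `h` to order
exactly `e β`.
-/

section WalkPotential

variable {V ι : Type*} (step : V → ι → V) (w : V → ι → ℤ)

def walkWeight : V → List ι → ℤ
  | _, [] => 0
  | s, i :: l => w s i + walkWeight (step s i) l

theorem walkWeight_append (s : V) (l₁ l₂ : List ι) :
    walkWeight step w s (l₁ ++ l₂) =
      walkWeight step w s l₁ + walkWeight step w (l₁.foldl step s) l₂ := by
  induction l₁ generalizing s with
  | nil => simp [walkWeight]
  | cons i l ih => simp [walkWeight, ih, add_assoc]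

variable {step w} {S : Finset V}

theorem foldl_mem_of_mapsTo (hS : ∀ s ∈ S, ∀ i, step s i ∈ S) {s : V} (hs : s ∈ S)
    (l : List ι) : l.foldl step s ∈ S := by
  induction l generalizing s with
  | nil => exact hs
  | cons i l ih => exact ih (hS s hs i)

theorem neg_mul_length_le_walkWeight (hS : ∀ s ∈ S, ∀ i, step s i ∈ S) {M : ℤ}
    (hM : ∀ t ∈ S, ∀ i, -M ≤ w t i) {s : V} (hs : s ∈ S) (l : List ι) :
    -(l.length * M) ≤ walkWeight step w s l := by
  induction l generalizing s with
  | nil => simp [walkWeight]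
  | cons i l ih =>
    have := ih (hS s hs i)
    have := hM s hs i
    simp only [walkWeight, List.length_cons]
    push_cast
    linarith

theorem exists_shorter_walk (hS : ∀ s ∈ S, ∀ i, step s i ∈ S)
    (hcyc : ∀ s ∈ S, ∀ l : List ι, l.foldl step s = s → 0 ≤ walkWeight step w s l)
    {s : V} (hs : s ∈ S) {l : List ι} (hl : S.card < l.length) :
    ∃ l' : List ι, l'.length < l.length ∧ l'.foldl step s = l.foldl step s ∧
      walkWeight step w s l' ≤ walkWeight step w s l := by
  obtain ⟨p, hp, q, hq, hpq, hend⟩ := Finset.exists_ne_map_eq_of_card_lt_of_maps_to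
    (s := Finset.range (l.length + 1)) (f := fun n => (l.take n).foldl step s)
    (by simp; omega) fun n _ => foldl_mem_of_mapsTo hS hs _
  wlog hlt : p < q generalizing p q
  · exact this q hq p hp hpq.symm hend.symm (by omega)
  simp only [Finset.mem_range] at hp hq
  -- `l = l.take p ++ loop ++ l.drop q`, where `loop` returns to its starting point
  set loop := (l.take q).drop p
  have htake : l.take q = l.take p ++ loop := by
    rw [← List.take_append_drop p (l.take q), List.take_take, min_eq_left hlt.le]
  have hloop : loop.foldl step ((l.take p).foldl step s) = (l.take p).foldl step s := by
    rw [← List.foldl_append, ← htake]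
    exact hend.symm
  refine ⟨l.take p ++ l.drop q, by simp; omega, ?_, ?_⟩
  · conv_rhs => rw [← List.take_append_drop q l, htake]
    simp only [List.foldl_append, hloop]
  · conv_rhs => rw [← List.take_append_drop q l, htake]
    rw [walkWeight_append, walkWeight_append, walkWeight_append, List.foldl_append, hloop]
    linarith [hcyc _ (foldl_mem_of_mapsTo hS hs _) loop hloop]

theorem exists_walk_length_le_card (hS : ∀ s ∈ S, ∀ i, step s i ∈ S)
    (hcyc : ∀ s ∈ S, ∀ l : List ι, l.foldl step s = s → 0 ≤ walkWeight step w s l)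
    {s : V} (hs : s ∈ S) (l : List ι) :
    ∃ l' : List ι, l'.length ≤ S.card ∧ l'.foldl step s = l.foldl step s ∧
      walkWeight step w s l' ≤ walkWeight step w s l := by
  induction h : l.length using Nat.strong_induction_on generalizing l with
  | _ n ih =>
    by_cases hl : l.length ≤ S.card
    · exact ⟨l, hl, rfl, le_rfl⟩
    obtain ⟨l', hlen, hend, hwt⟩ := exists_shorter_walk hS hcyc hs (not_le.mp hl)
    obtain ⟨l'', hlen', hend', hwt'⟩ := ih _ (h ▸ hlen) l' rfl
    exact ⟨l'', hlen', hend'.trans hend, hwt'.trans hwt⟩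

theorem exists_potential_of_walkWeight_nonneg [Finite ι] (hS : ∀ s ∈ S, ∀ i, step s i ∈ S)
    (hcyc : ∀ s ∈ S, ∀ l : List ι, l.foldl step s = s → 0 ≤ walkWeight step w s l) :
    ∃ p : V → ℕ, ∀ s ∈ S, ∀ i, (p s : ℤ) ≤ p (step s i) + w s i := by
  obtain ⟨b, hb⟩ := ((S.finite_toSet.prod (Set.finite_univ (α := ι))).image
    fun x => w x.1 x.2).bddBelow
  set M := max (-b) 0
  have hM : ∀ t ∈ S, ∀ i, -M ≤ w t i := fun t ht i =>
    le_trans (neg_le.mpr (le_max_left _ _)) (hb ⟨(t, i), ⟨ht, trivial⟩, rfl⟩)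
  set reach : V → Set ℤ := fun v =>
    {x | ∃ t ∈ S, ∃ l : List ι, l.foldl step t = v ∧ x = -walkWeight step w t l}
  have hbdd : ∀ v, BddAbove (reach v) := by
    refine fun v => ⟨S.card * M, ?_⟩
    rintro _ ⟨t, ht, l, -, rfl⟩
    obtain ⟨l', hlen, -, hwt⟩ := exists_walk_length_le_card hS hcyc ht l
    have := neg_mul_length_le_walkWeight hS hM ht l'
    have : (l'.length : ℤ) * M ≤ S.card * M := by gcongr
    linarith
  have hzero : ∀ v ∈ S, (0 : ℤ) ∈ reach v := fun v hv =>
    ⟨v, hv, [], rfl, by simp [walkWeight]⟩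
  have hpot : ∀ v ∈ S, ((sSup (reach v)).toNat : ℤ) = sSup (reach v) := fun v hv =>
    Int.toNat_of_nonneg (le_csSup (hbdd v) (hzero v hv))
  refine ⟨fun v => (sSup (reach v)).toNat, fun s hs i => ?_⟩
  rw [hpot s hs, hpot _ (hS s hs i)]
  refine csSup_le ⟨0, hzero s hs⟩ ?_
  rintro _ ⟨t, ht, l, rfl, rfl⟩
  have hext : -walkWeight step w t l - w (l.foldl step t) i ∈ reach (step (l.foldl step t) i) :=
    ⟨t, ht, l ++ [i], by simp, by simp [walkWeight_append, walkWeight]; ring⟩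
  linarith [le_csSup (hbdd _) hext]

end WalkPotential

section Valuation

variable {K : Type*} [Field K]

theorem toRat_ne_zero {p : K[X]} (hp : p ≠ 0) : toRat p ≠ 0 :=
  RatFunc.algebraMap_ne_zero hp

theorem toRat_mul (p q : K[X]) : toRat (p * q) = toRat p * toRat q :=
  map_mul _ p q

theorem substPow_toRat (d : ℕ) (p : K[X]) : substPow d (toRat p) = toRat (p.comp (X ^ d)) := by
  rw [substPow, RatFunc.eval, toRat, RatFunc.num_algebraMap, RatFunc.denom_algebraMap,
    eval₂_one, div_one, comp, toRat, hom_eval₂, map_pow, RatFunc.algebraMap_X]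
  rfl

theorem vInt_div_toRat (γ : K) {p q : K[X]} (hp : p ≠ 0) (hq : q ≠ 0) :
    vInt γ (toRat p / toRat q) = (p.rootMultiplicity γ : ℤ) - q.rootMultiplicity γ := by
  set f := toRat p / toRat q with hf
  have hf0 : f ≠ 0 := div_ne_zero (toRat_ne_zero hp) (toRat_ne_zero hq)
  have hcross : f.num * q = p * f.denom := by
    apply RatFunc.algebraMap_injective K
    rw [map_mul, map_mul, ← div_eq_div_iff (RatFunc.algebraMap_ne_zero f.denom_ne_zero)
      (RatFunc.algebraMap_ne_zero hq)]
    exact RatFunc.num_div_denom f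
  have hmult := congrArg (rootMultiplicity γ) hcross
  rw [rootMultiplicity_mul (mul_ne_zero (RatFunc.num_ne_zero hf0) hq),
    rootMultiplicity_mul (mul_ne_zero hp f.denom_ne_zero)] at hmult
  rw [vInt]
  omega

theorem zero_le_vAt_div_toRat {γ : K} {p q : K[X]} (hq : q ≠ 0)
    (hle : p ≠ 0 → q.rootMultiplicity γ ≤ p.rootMultiplicity γ) :
    0 ≤ vAt γ (toRat p / toRat q) := by
  by_cases hp : p = 0
  · simp [vAt, hp, toRat]
  rw [vAt, if_neg (div_ne_zero (toRat_ne_zero hp) (toRat_ne_zero hq)), vInt_div_toRat γ hp hq]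
  have := hle hp
  exact WithTop.coe_le_coe.mpr (by omega)

theorem act_toRat (k : ℕ) (h : K[X]) {n : ℕ} (c : Fin n → RatFunc K) (i : Fin n) :
    act k (toRat h) c i =
      toRat (h.comp (X ^ k ^ (i.1 + 1)) * (c i).num) / toRat (h * (c i).denom) := by
  conv_lhs => rw [act, substPow_toRat, ← RatFunc.num_div_denom (c i)]
  rw [toRat_mul, toRat_mul, div_mul_div_comm]
  rfl

theorem zero_le_vAt_act (k : ℕ) {h : K[X]} (hh : h ≠ 0) {n : ℕ} (c : Fin n → RatFunc K)
    (i : Fin n) (γ : K)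
    (hle : h.comp (X ^ k ^ (i.1 + 1)) ≠ 0 → (h.rootMultiplicity γ : ℤ) ≤
      (h.comp (X ^ k ^ (i.1 + 1))).rootMultiplicity γ + vInt γ (c i)) :
    0 ≤ vAt γ (act k (toRat h) c i) := by
  rw [act_toRat]
  refine zero_le_vAt_div_toRat (mul_ne_zero hh (c i).denom_ne_zero) fun hp => ?_
  have hcomp := left_ne_zero_of_mul hp
  rw [rootMultiplicity_mul hp, rootMultiplicity_mul (mul_ne_zero hh (c i).denom_ne_zero)]
  have := hle hcomp
  rw [vInt] at this
  omega

theorem rootMultiplicity_prod_X_sub_C_pow (s : Finset K) (e : K → ℕ) {γ : K} (hγ : γ ∈ s) :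
    (∏ β ∈ s, (X - C β) ^ e β).rootMultiplicity γ = e γ := by
  have hrest : ¬ (∏ β ∈ s.erase γ, (X - C β) ^ e β).IsRoot γ := by
    simp only [IsRoot, eval_prod, eval_pow, eval_sub, eval_X, eval_C]
    exact Finset.prod_ne_zero_iff.mpr fun β hβ =>
      pow_ne_zero _ (sub_ne_zero.mpr (Finset.ne_of_mem_erase hβ).symm)
  rw [← Finset.mul_prod_erase s _ hγ, rootMultiplicity_mul, rootMultiplicity_X_sub_C_pow,
    rootMultiplicity_eq_zero hrest, add_zero]
  exact mul_ne_zero (pow_ne_zero _ (X_sub_C_ne_zero γ)) (Finset.prod_ne_zero_iff.mpr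
    fun β _ => pow_ne_zero _ (X_sub_C_ne_zero β))

theorem X_sub_C_pow_dvd_comp_X_pow {p : K[X]} {a b : K} {n d : ℕ} (hab : b ^ d = a)
    (hdvd : (X - C a) ^ n ∣ p) : (X - C b) ^ n ∣ p.comp (X ^ d) := by
  obtain ⟨q, rfl⟩ := hdvd
  rw [mul_comp, pow_comp, sub_comp, X_comp, C_comp, ← hab, C_pow]
  exact (pow_dvd_pow_of_dvd (sub_dvd_pow_sub_pow X (C b) d) n).mul_right _

end Valuation

section Calmness

variable {K : Type*} [Field K] (k : ℕ) {n : ℕ}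

def powStep (β : K) (i : Fin n) : K := β ^ k ^ (i.1 + 1)

theorem foldl_powStep (β : K) (l : List (Fin n)) : l.foldl (powStep k) β = β ^ k ^ barSum l := by
  induction l generalizing β with
  | nil => simp [barSum]
  | cons a l ih => simp [ih, powStep, barSum, ← pow_mul, ← pow_add]

theorem clmList_cons (β : K) (c : Fin n → RatFunc K) (a : Fin n) (l : List (Fin n)) :
    clmList k β c (a :: l) = vAt β (c a) + clmList k (powStep k β a) c l := by
  have habar : ∀ j : ℕ, abarList (a :: l) (j + 1) = (a.1 + 1) + abarList l j := by
    simp [abarList, List.take_succ_cons]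
  simp only [clmList, List.length_cons, Fin.sum_univ_succ]
  refine congrArg₂ (· + ·) (by simp [abarList]) (Finset.sum_congr rfl fun x _ => ?_)
  simp only [Fin.val_succ, habar, powStep, pow_add, pow_mul]
  rfl

theorem clmList_eq_walkWeight {c : Fin n → RatFunc K} (hc : ∀ i, c i ≠ 0) (β : K)
    (l : List (Fin n)) :
    clmList k β c l = walkWeight (powStep k) (fun γ i => vInt γ (c i)) β l := by
  induction l generalizing β with
  | nil => simp [clmList, walkWeight]
  | cons a l ih => simp [clmList_cons, ih, walkWeight, vAt, hc]

end Calmness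

theorem pow_pow_mod {M : Type*} [Monoid M] {α : M} {k m : ℕ} (hα : α ^ k ^ m = α) (j : ℕ) :
    α ^ k ^ (j % m) = α ^ k ^ j := by
  have hper : Function.IsPeriodicPt (· ^ k) m α := by
    rw [Function.IsPeriodicPt, Function.IsFixedPt, pow_iterate]; exact hα
  simpa [pow_iterate] using hper.iterate_mod_apply j

theorem stmt11_general {K : Type*} [Field K] (k : ℕ) (α : K)
    (m : ℕ) (hm : 0 < m) (hmfix : α ^ k ^ m = α)
    (c : Fin m → RatFunc K) (hcz : ∀ i, c i ≠ 0)
    (hclm : ∀ i : ℕ, i < m → ∀ l : List (Fin m),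
      α ^ k ^ (i + barSum l) = α ^ k ^ i → 0 ≤ clmList k (α ^ k ^ i) c l) :
    ∃ h : Polynomial K, h ≠ 0 ∧
      ∀ (j : ℕ) (i : Fin m), 0 ≤ vAt (α ^ k ^ j) (act k (toRat h) c i) := by
  set orbit := (Finset.range m).image fun j => α ^ k ^ j
  have hmem : ∀ j, α ^ k ^ j ∈ orbit := fun j =>
    Finset.mem_image.mpr ⟨j % m, Finset.mem_range.mpr (Nat.mod_lt j hm), pow_pow_mod hmfix j⟩
  have hstep : ∀ β ∈ orbit, ∀ i : Fin m, powStep k β i ∈ orbit := by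
    simp only [orbit, Finset.forall_mem_image, powStep, ← pow_mul, ← pow_add]
    exact fun j _ i => hmem _
  have hcyc : ∀ β ∈ orbit, ∀ l : List (Fin m), l.foldl (powStep k) β = β →
      0 ≤ walkWeight (powStep k) (fun γ i => vInt γ (c i)) β l := by
    simp only [orbit, Finset.forall_mem_image, Finset.mem_range, foldl_powStep, ← pow_mul,
      ← pow_add]
    intro j hj l hl
    exact_mod_cast (clmList_eq_walkWeight k hcz _ l) ▸ hclm j hj l hl
  obtain ⟨e, he⟩ := exists_potential_of_walkWeight_nonneg hstep hcyc
  set h := ∏ β ∈ orbit, (X - C β) ^ e β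
  have hh : h ≠ 0 := Finset.prod_ne_zero_iff.mpr fun β _ => pow_ne_zero _ (X_sub_C_ne_zero β)
  refine ⟨h, hh, fun j i => zero_le_vAt_act k hh c i _ fun hcomp => ?_⟩
  have hdvd : (X - C (powStep k (α ^ k ^ j) i)) ^ e (powStep k (α ^ k ^ j) i) ∣ h :=
    Finset.dvd_prod_of_mem _ (hstep _ (hmem j) i)
  have hle := (le_rootMultiplicity_iff hcomp).mpr (X_sub_C_pow_dvd_comp_X_pow rfl hdvd)
  rw [rootMultiplicity_prod_X_sub_C_pow orbit e (hmem j)]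
  linarith [he _ (hmem j) i, (Nat.cast_le (α := ℤ)).mpr hle]

theorem stmt11 {K : Type*} [Field K] [IsAlgClosed K] (k : ℕ) (hk : 2 ≤ k)
    (hch : ∀ p : ℕ, p.Prime → CharP K p → ¬ p ∣ k)
    (α : K) (hα : IsAnxious k α) (hru : IsRootOfUnity α)
    (m : ℕ) (hm : 0 < m) (hmfix : α ^ k ^ m = α)
    (hmin : ∀ m' : ℕ, 0 < m' → α ^ k ^ m' = α → m ≤ m')
    (c : Fin m → RatFunc K) (hcz : ∀ i, c i ≠ 0)
    (hclm : ∀ i : ℕ, i < m → ∀ l : List (Fin m),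
      α ^ k ^ (i + barSum l) = α ^ k ^ i → 0 ≤ clmList k (α ^ k ^ i) c l)
    (hminclm : ∀ (a : ℕ) (b : Fin m) (i : ℕ) (l : List (Fin m)),
      i < m → α ^ k ^ (i + barSum l) = α ^ k ^ i →
      (∃ y : Fin l.length, α ^ k ^ (i + abarList l y.1) = α ^ k ^ a ∧ l.get y = b) →
      (∀ (i' : ℕ) (l' : List (Fin m)), i' < m → α ^ k ^ (i' + barSum l') = α ^ k ^ i' →
        (∃ y : Fin l'.length, α ^ k ^ (i' + abarList l' y.1) = α ^ k ^ a ∧ l'.get y = b) →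
        clmList k (α ^ k ^ i) c l ≤ clmList k (α ^ k ^ i') c l') →
      clmList k (α ^ k ^ i) c l = 0) :
    ∃ h : Polynomial K, h ≠ 0 ∧
      ∀ (j : ℕ) (i : Fin m), 0 ≤ vAt (α ^ k ^ j) (act k (toRat h) c i) :=
  stmt11_general k α m hm hmfix c hcz hclm
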